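/- Let a, M ∈ ℝ, s ∈ ℤ, and let ψ be a smooth complex-valued function of (v, r, θ, φ) on an open subset of ℝ × ℝ × (0,π) × ℝ. Define the Teukolsky operator 𝒯ψ = a²sin²θ·∂_v²ψ + 2a·∂_v∂_φψ + 2(r²+a²)·∂_v∂_rψ + 2a·∂_φ∂_rψ + Δ(r)·∂_r²ψ + 2(r(1−2s) − i·s·a·cosθ)·∂_vψ + 2(r−M)(1−s)·∂_rψ + Δ̊_{[s]}ψ − 2s·ψ, where Δ(r) = r² − 2Mr + a², and the spin s-weighted Carter operator 𝒬ψ = a²sin²θ·∂_v²ψ − 2·i·s·a·cosθ·∂_vψ + Δ̊_{[s]}ψ. Then 𝒯 and 𝒬 commute: 𝒯(𝒬ψ) = 𝒬(𝒯ψ) at every point of the domain. -/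

import Mathlib

open Set

/-- Partial derivative in the first (`v`) coordinate. -/
noncomputable def pdV (ψ : ℝ × ℝ × ℝ × ℝ → ℂ) : ℝ × ℝ × ℝ × ℝ → ℂ := fun p =>
  deriv (fun v => ψ (v, p.2.1, p.2.2.1, p.2.2.2)) p.1

/-- Partial derivative in the second (`r`) coordinate. -/
noncomputable def pdR (ψ : ℝ × ℝ × ℝ × ℝ → ℂ) : ℝ × ℝ × ℝ × ℝ → ℂ := fun p =>
  deriv (fun r => ψ (p.1, r, p.2.2.1, p.2.2.2)) p.2.1

/-- Partial derivative in the fourth (`φ`) coordinate. -/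
noncomputable def pdPh (ψ : ℝ × ℝ × ℝ × ℝ → ℂ) : ℝ × ℝ × ℝ × ℝ → ℂ := fun p =>
  deriv (fun φ => ψ (p.1, p.2.1, p.2.2.1, φ)) p.2.2.2

/-- The spin `s`-weighted Laplacian `Δ̊_[s]` acting in the angular variables `(θ, φ)` of a
function of `(v, r, θ, φ)`. -/
noncomputable def spinLap4 (s : ℤ) (ψ : ℝ × ℝ × ℝ × ℝ → ℂ) : ℝ × ℝ × ℝ × ℝ → ℂ := fun p =>
  (1 / (Real.sin p.2.2.1 : ℂ)) *
      deriv (fun θ => (Real.sin θ : ℂ) *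
        deriv (fun θ' => ψ (p.1, p.2.1, θ', p.2.2.2)) θ) p.2.2.1
    + (1 / (Real.sin p.2.2.1 : ℂ) ^ 2) * pdPh (pdPh ψ) p
    + 2 * Complex.I * (s : ℂ) * ((Real.cos p.2.2.1 : ℂ) / (Real.sin p.2.2.1 : ℂ) ^ 2) *
        pdPh ψ p
    - ((s : ℂ) ^ 2 * (Real.cos p.2.2.1 : ℂ) ^ 2 / (Real.sin p.2.2.1 : ℂ) ^ 2 - (s : ℂ)) * ψ p

/-- The Teukolsky operator `𝒯_[s]` on Kerr with mass `M` and angular momentum per unit mass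
`a`, written in ingoing coordinates `(v₊, r, θ, φ₊)`. -/
noncomputable def teukolskyOp (s : ℤ) (a M : ℝ) (ψ : ℝ × ℝ × ℝ × ℝ → ℂ) :
    ℝ × ℝ × ℝ × ℝ → ℂ := fun p =>
  (a : ℂ) ^ 2 * (Real.sin p.2.2.1 : ℂ) ^ 2 * pdV (pdV ψ) p
    + 2 * (a : ℂ) * pdV (pdPh ψ) p
    + 2 * ((p.2.1 : ℂ) ^ 2 + (a : ℂ) ^ 2) * pdV (pdR ψ) p
    + 2 * (a : ℂ) * pdPh (pdR ψ) p
    + ((p.2.1 : ℂ) ^ 2 - 2 * (M : ℂ) * (p.2.1 : ℂ) + (a : ℂ) ^ 2) * pdR (pdR ψ) p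
    + 2 * ((p.2.1 : ℂ) * (1 - 2 * (s : ℂ))
        - Complex.I * (s : ℂ) * (a : ℂ) * (Real.cos p.2.2.1 : ℂ)) * pdV ψ p
    + 2 * ((p.2.1 : ℂ) - (M : ℂ)) * (1 - (s : ℂ)) * pdR ψ p
    + spinLap4 s ψ p
    - 2 * (s : ℂ) * ψ p

/-- The spin `s`-weighted Carter operator `𝒬_[s]`. -/
noncomputable def carterOp (s : ℤ) (a : ℝ) (ψ : ℝ × ℝ × ℝ × ℝ → ℂ) :
    ℝ × ℝ × ℝ × ℝ → ℂ := fun p =>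
  (a : ℂ) ^ 2 * (Real.sin p.2.2.1 : ℂ) ^ 2 * pdV (pdV ψ) p
    - 2 * Complex.I * (s : ℂ) * (a : ℂ) * (Real.cos p.2.2.1 : ℂ) * pdV ψ p
    + spinLap4 s ψ p


open scoped ContDiff

namespace Aux12

abbrev Pt : Type := ℝ × ℝ × ℝ × ℝ

def eV : Pt := (1, 0, 0, 0)
def eRr : Pt := (0, 1, 0, 0)
def eT : Pt := (0, 0, 1, 0)
def ePh : Pt := (0, 0, 0, 1)

noncomputable def D (e : Pt) (f : Pt → ℂ) : Pt → ℂ := fun q => fderiv ℝ f q e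

def projT : Pt →L[ℝ] ℝ :=
  (ContinuousLinearMap.fst ℝ ℝ ℝ).comp ((ContinuousLinearMap.snd ℝ ℝ (ℝ × ℝ)).comp
    (ContinuousLinearMap.snd ℝ ℝ (ℝ × ℝ × ℝ)))

def projR : Pt →L[ℝ] ℝ :=
  (ContinuousLinearMap.fst ℝ ℝ (ℝ × ℝ)).comp (ContinuousLinearMap.snd ℝ ℝ (ℝ × ℝ × ℝ))

theorem evOn {U : Set Pt} (hU : IsOpen U) {p : Pt} (hp : p ∈ U) {f g : Pt → ℂ}
    (h : EqOn f g U) : f =ᶠ[nhds p] g :=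
  Filter.eventuallyEq_of_mem (hU.mem_nhds hp) h

theorem D_congr (e : Pt) {f g : Pt → ℂ} {p : Pt} (h : f =ᶠ[nhds p] g) : D e f p = D e g p := by
  unfold D; rw [h.fderiv_eq]

theorem DA {U : Set Pt} (hU : IsOpen U) {f : Pt → ℂ} (hf : ContDiffOn ℝ ∞ f U) {p : Pt}
    (hp : p ∈ U) : DifferentiableAt ℝ f p :=
  (hf.contDiffAt (hU.mem_nhds hp)).differentiableAt (by decide)

theorem D_smooth {U : Set Pt} (hU : IsOpen U) {f : Pt → ℂ} (hf : ContDiffOn ℝ ∞ f U) (e : Pt) :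
    ContDiffOn ℝ ∞ (D e f) U :=
  (hf.fderiv_of_isOpen hU (le_refl _)).clm_apply contDiffOn_const

theorem D_comm {U : Set Pt} (hU : IsOpen U) {f : Pt → ℂ} (hf : ContDiffOn ℝ ∞ f U) {p : Pt}
    (hp : p ∈ U) (e e' : Pt) : D e (D e' f) p = D e' (D e f) p := by
  have hdf : DifferentiableAt ℝ (fderiv ℝ f) p :=
    ((hf.fderiv_of_isOpen (m := ∞) hU (le_refl _)).contDiffAt (hU.mem_nhds hp)).differentiableAt
      (by decide)
  have key : ∀ w : Pt, fderiv ℝ (fun q => fderiv ℝ f q w) p = (fderiv ℝ (fderiv ℝ f) p).flip w := by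
    intro w
    have h := fderiv_clm_apply (c := fderiv ℝ f) (u := fun _ => w) hdf (differentiableAt_const w)
    simpa using h
  have hsymm : IsSymmSndFDerivAt ℝ f p :=
    (hf.contDiffAt (hU.mem_nhds hp)).isSymmSndFDerivAt
      (by simp; exact ENat.LEInfty.out)
  show fderiv ℝ (fun q => fderiv ℝ f q e') p e = fderiv ℝ (fun q => fderiv ℝ f q e) p e'
  rw [key e', key e]
  simpa using hsymm.eq e e'

theorem D_add {f g : Pt → ℂ} {p : Pt} (hf : DifferentiableAt ℝ f p)
    (hg : DifferentiableAt ℝ g p) (e : Pt) :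
    D e (fun q => f q + g q) p = D e f p + D e g p := by
  have H : HasFDerivAt (fun q => f q + g q) (fderiv ℝ f p + fderiv ℝ g p) p :=
    hf.hasFDerivAt.add hg.hasFDerivAt
  show fderiv ℝ (fun q => f q + g q) p e = _
  rw [H.fderiv]; simp [D]

theorem D_add6 {t1 t2 t3 t4 t5 t6 : Pt → ℂ} {p : Pt}
    (h1 : DifferentiableAt ℝ t1 p) (h2 : DifferentiableAt ℝ t2 p) (h3 : DifferentiableAt ℝ t3 p)
    (h4 : DifferentiableAt ℝ t4 p) (h5 : DifferentiableAt ℝ t5 p) (h6 : DifferentiableAt ℝ t6 p)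
    (e : Pt) :
    D e (fun q => t1 q + t2 q + t3 q + t4 q + t5 q + t6 q) p
      = D e t1 p + D e t2 p + D e t3 p + D e t4 p + D e t5 p + D e t6 p := by
  have H : HasFDerivAt (fun q => t1 q + t2 q + t3 q + t4 q + t5 q + t6 q)
      (fderiv ℝ t1 p + fderiv ℝ t2 p + fderiv ℝ t3 p + fderiv ℝ t4 p + fderiv ℝ t5 p
        + fderiv ℝ t6 p) p :=
    ((((h1.hasFDerivAt.add h2.hasFDerivAt).add h3.hasFDerivAt).add h4.hasFDerivAt).add
      h5.hasFDerivAt).add h6.hasFDerivAt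
  show fderiv ℝ (fun q => t1 q + t2 q + t3 q + t4 q + t5 q + t6 q) p e = _
  rw [H.fderiv]; simp [D]

theorem D_mul_th {F : ℝ → ℂ} {f : Pt → ℂ} {p e : Pt}
    (hF : DifferentiableAt ℝ F p.2.2.1) (hf : DifferentiableAt ℝ f p) (he : e.2.2.1 = 0) :
    D e (fun q => F q.2.2.1 * f q) p = F p.2.2.1 * D e f p := by
  have hc : HasFDerivAt (fun q : Pt => F q.2.2.1)
      (((1 : ℝ →L[ℝ] ℝ).smulRight (deriv F p.2.2.1)).comp projT) p :=
    (hF.hasDerivAt.hasFDerivAt).comp p projT.hasFDerivAt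
  have H := hc.mul hf.hasFDerivAt
  have hz : projT e = (0:ℝ) := he
  show fderiv ℝ (fun q : Pt => F q.2.2.1 * f q) p e = _
  rw [show fderiv ℝ (fun q : Pt => F q.2.2.1 * f q) p
      = F p.2.2.1 • fderiv ℝ f p
        + f p • (((1 : ℝ →L[ℝ] ℝ).smulRight (deriv F p.2.2.1)).comp projT) from H.fderiv]
  simp [D, hz]

theorem D_mul_r {F : ℝ → ℂ} {f : Pt → ℂ} {p e : Pt}
    (hF : DifferentiableAt ℝ F p.2.1) (hf : DifferentiableAt ℝ f p) (he : e.2.1 = 0) :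
    D e (fun q => F q.2.1 * f q) p = F p.2.1 * D e f p := by
  have hc : HasFDerivAt (fun q : Pt => F q.2.1)
      (((1 : ℝ →L[ℝ] ℝ).smulRight (deriv F p.2.1)).comp projR) p :=
    (hF.hasDerivAt.hasFDerivAt).comp p projR.hasFDerivAt
  have H := hc.mul hf.hasFDerivAt
  have hz : projR e = (0:ℝ) := he
  show fderiv ℝ (fun q : Pt => F q.2.1 * f q) p e = _
  rw [show fderiv ℝ (fun q : Pt => F q.2.1 * f q) p
      = F p.2.1 • fderiv ℝ f p
        + f p • (((1 : ℝ →L[ℝ] ℝ).smulRight (deriv F p.2.1)).comp projR) from H.fderiv]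
  simp [D, hz]

end Aux12
namespace Aux12

/-- θ-partial, auxiliary. -/
noncomputable def pdT (f : Pt → ℂ) : Pt → ℂ := fun p =>
  deriv (fun θ => f (p.1, p.2.1, θ, p.2.2.2)) p.2.2.1

theorem hasDerivAt_curveV (p : Pt) :
    HasDerivAt (fun v : ℝ => ((v, p.2.1, p.2.2.1, p.2.2.2) : Pt)) eV p.1 :=
  HasDerivAt.prodMk (hasDerivAt_id p.1) (hasDerivAt_const p.1 _)

theorem hasDerivAt_curveR (p : Pt) :
    HasDerivAt (fun r : ℝ => ((p.1, r, p.2.2.1, p.2.2.2) : Pt)) eRr p.2.1 :=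
  HasDerivAt.prodMk (hasDerivAt_const p.2.1 p.1) (HasDerivAt.prodMk (hasDerivAt_id p.2.1) (hasDerivAt_const _ _))

theorem hasDerivAt_curveT (p : Pt) :
    HasDerivAt (fun θ : ℝ => ((p.1, p.2.1, θ, p.2.2.2) : Pt)) eT p.2.2.1 :=
  HasDerivAt.prodMk (hasDerivAt_const p.2.2.1 p.1) (HasDerivAt.prodMk (hasDerivAt_const p.2.2.1 p.2.1)
    (HasDerivAt.prodMk (hasDerivAt_id p.2.2.1) (hasDerivAt_const _ _)))

theorem hasDerivAt_curvePh (p : Pt) :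
    HasDerivAt (fun φ : ℝ => ((p.1, p.2.1, p.2.2.1, φ) : Pt)) ePh p.2.2.2 :=
  HasDerivAt.prodMk (hasDerivAt_const p.2.2.2 p.1) (HasDerivAt.prodMk (hasDerivAt_const p.2.2.2 p.2.1)
    (HasDerivAt.prodMk (hasDerivAt_const p.2.2.2 p.2.2.1) (hasDerivAt_id p.2.2.2)))

theorem pdV_eq {f : Pt → ℂ} {p : Pt} (hf : DifferentiableAt ℝ f p) : pdV f p = D eV f p :=
  (hf.hasFDerivAt.comp_hasDerivAt p.1 (hasDerivAt_curveV p)).deriv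

theorem pdR_eq {f : Pt → ℂ} {p : Pt} (hf : DifferentiableAt ℝ f p) : pdR f p = D eRr f p :=
  (hf.hasFDerivAt.comp_hasDerivAt p.2.1 (hasDerivAt_curveR p)).deriv

theorem pdT_eq {f : Pt → ℂ} {p : Pt} (hf : DifferentiableAt ℝ f p) : pdT f p = D eT f p :=
  (hf.hasFDerivAt.comp_hasDerivAt p.2.2.1 (hasDerivAt_curveT p)).deriv

theorem pdPh_eq {f : Pt → ℂ} {p : Pt} (hf : DifferentiableAt ℝ f p) : pdPh f p = D ePh f p :=
  (hf.hasFDerivAt.comp_hasDerivAt p.2.2.2 (hasDerivAt_curvePh p)).deriv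

theorem pdV_congr {f g : Pt → ℂ} {p : Pt} (h : f =ᶠ[nhds p] g) : pdV f p = pdV g p := by
  unfold pdV
  apply Filter.EventuallyEq.deriv_eq
  have hc : Continuous (fun v : ℝ => ((v, p.2.1, p.2.2.1, p.2.2.2) : Pt)) := by fun_prop
  exact h.comp_tendsto (hc.tendsto' p.1 p rfl)

theorem pdR_congr {f g : Pt → ℂ} {p : Pt} (h : f =ᶠ[nhds p] g) : pdR f p = pdR g p := by
  unfold pdR
  apply Filter.EventuallyEq.deriv_eq
  have hc : Continuous (fun r : ℝ => ((p.1, r, p.2.2.1, p.2.2.2) : Pt)) := by fun_prop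
  exact h.comp_tendsto (hc.tendsto' p.2.1 p rfl)

theorem pdT_congr {f g : Pt → ℂ} {p : Pt} (h : f =ᶠ[nhds p] g) : pdT f p = pdT g p := by
  unfold pdT
  apply Filter.EventuallyEq.deriv_eq
  have hc : Continuous (fun θ : ℝ => ((p.1, p.2.1, θ, p.2.2.2) : Pt)) := by fun_prop
  exact h.comp_tendsto (hc.tendsto' p.2.2.1 p rfl)

theorem pdPh_congr {f g : Pt → ℂ} {p : Pt} (h : f =ᶠ[nhds p] g) : pdPh f p = pdPh g p := by
  unfold pdPh
  apply Filter.EventuallyEq.deriv_eq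
  have hc : Continuous (fun φ : ℝ => ((p.1, p.2.1, p.2.2.1, φ) : Pt)) := by fun_prop
  exact h.comp_tendsto (hc.tendsto' p.2.2.2 p rfl)

section EqOnLemmas

variable {U : Set Pt} (hU : IsOpen U)
include hU

theorem pdV_congrOn {f g : Pt → ℂ} (h : Set.EqOn f g U) : Set.EqOn (pdV f) (pdV g) U :=
  fun _ hq => pdV_congr (evOn hU hq h)

theorem pdR_congrOn {f g : Pt → ℂ} (h : Set.EqOn f g U) : Set.EqOn (pdR f) (pdR g) U :=
  fun _ hq => pdR_congr (evOn hU hq h)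

theorem pdT_congrOn {f g : Pt → ℂ} (h : Set.EqOn f g U) : Set.EqOn (pdT f) (pdT g) U :=
  fun _ hq => pdT_congr (evOn hU hq h)

theorem pdPh_congrOn {f g : Pt → ℂ} (h : Set.EqOn f g U) : Set.EqOn (pdPh f) (pdPh g) U :=
  fun _ hq => pdPh_congr (evOn hU hq h)

end EqOnLemmas

end Aux12
namespace Aux12

/-! ### Coefficient functions -/

noncomputable abbrev F1 (a : ℝ) : ℝ → ℂ := fun θ => (a : ℂ) ^ 2 * (Real.sin θ : ℂ) ^ 2
noncomputable abbrev F2 (s : ℤ) (a : ℝ) : ℝ → ℂ :=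
  fun θ => -(2 * Complex.I * (s : ℂ) * (a : ℂ)) * (Real.cos θ : ℂ)
noncomputable abbrev F3 : ℝ → ℂ := fun θ => 1 / (Real.sin θ : ℂ)
noncomputable abbrev F4 : ℝ → ℂ := fun θ => 1 / (Real.sin θ : ℂ) ^ 2
noncomputable abbrev F5 (s : ℤ) : ℝ → ℂ :=
  fun θ => 2 * Complex.I * (s : ℂ) * ((Real.cos θ : ℂ) / (Real.sin θ : ℂ) ^ 2)
noncomputable abbrev F6 (s : ℤ) : ℝ → ℂ :=
  fun θ => -((s : ℂ) ^ 2 * (Real.cos θ : ℂ) ^ 2 / (Real.sin θ : ℂ) ^ 2 - (s : ℂ))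
noncomputable abbrev FS : ℝ → ℂ := fun θ => (Real.sin θ : ℂ)

noncomputable abbrev P1 (a : ℝ) : ℝ → ℂ := fun _ => 2 * (a : ℂ)
noncomputable abbrev P2 (a : ℝ) : ℝ → ℂ := fun r => 2 * ((r : ℂ) ^ 2 + (a : ℂ) ^ 2)
noncomputable abbrev P4 (a M : ℝ) : ℝ → ℂ :=
  fun r => (r : ℂ) ^ 2 - 2 * (M : ℂ) * (r : ℂ) + (a : ℂ) ^ 2
noncomputable abbrev P5 (s : ℤ) : ℝ → ℂ := fun r => 2 * (r : ℂ) * (1 - 2 * (s : ℂ))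
noncomputable abbrev P6 (s : ℤ) (M : ℝ) : ℝ → ℂ := fun r => 2 * ((r : ℂ) - (M : ℂ)) * (1 - (s : ℂ))
noncomputable abbrev P7 (s : ℤ) : ℝ → ℂ := fun _ => -(2 * (s : ℂ))

/-! ### The operators in `D`-form -/

/-- Carter operator, fderiv form. -/
noncomputable def carterD (s : ℤ) (a : ℝ) (f : Pt → ℂ) : Pt → ℂ := fun q =>
  F1 a q.2.2.1 * D eV (D eV f) q
  + F2 s a q.2.2.1 * D eV f q
  + F3 q.2.2.1 * D eT (fun q' => FS q'.2.2.1 * D eT f q') q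
  + F4 q.2.2.1 * D ePh (D ePh f) q
  + F5 s q.2.2.1 * D ePh f q
  + F6 s q.2.2.1 * f q

/-- Remainder `ℛ = 𝒯 - 𝒬`, fderiv form; coefficients depend only on `r`. -/
noncomputable def rOpD (s : ℤ) (a M : ℝ) (f : Pt → ℂ) : Pt → ℂ := fun q =>
  P1 a q.2.1 * D eV (D ePh f) q
  + P2 a q.2.1 * D eV (D eRr f) q
  + P1 a q.2.1 * D ePh (D eRr f) q
  + P4 a M q.2.1 * D eRr (D eRr f) q
  + P5 s q.2.1 * D eV f q
  + P6 s M q.2.1 * D eRr f q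
  + P7 s q.2.1 * f q

/-! ### Differentiability and smoothness of coefficients -/

theorem diff_FS : Differentiable ℝ FS :=
  Complex.ofRealCLM.differentiable.comp Real.differentiable_sin

theorem diff_FC : Differentiable ℝ (fun θ : ℝ => (Real.cos θ : ℂ)) :=
  Complex.ofRealCLM.differentiable.comp Real.differentiable_cos

theorem contDiff_FS : ContDiff ℝ ∞ FS := Complex.ofRealCLM.contDiff.comp Real.contDiff_sin

theorem contDiff_FC : ContDiff ℝ ∞ (fun θ : ℝ => (Real.cos θ : ℂ)) :=
  Complex.ofRealCLM.contDiff.comp Real.contDiff_cos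

theorem diff_F1 (a : ℝ) : Differentiable ℝ (F1 a) := (differentiable_const _).mul (diff_FS.pow 2)

theorem diff_F2 (s : ℤ) (a : ℝ) : Differentiable ℝ (F2 s a) := (differentiable_const _).mul diff_FC

theorem diff_F3 {θ : ℝ} (h : (Real.sin θ : ℂ) ≠ 0) : DifferentiableAt ℝ F3 θ :=
  (differentiableAt_const _).div diff_FS.differentiableAt h

theorem diff_F4 {θ : ℝ} (h : (Real.sin θ : ℂ) ≠ 0) : DifferentiableAt ℝ F4 θ :=
  (differentiableAt_const _).div (diff_FS.differentiableAt.pow 2) (pow_ne_zero _ h)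

theorem diff_F5 (s : ℤ) {θ : ℝ} (h : (Real.sin θ : ℂ) ≠ 0) : DifferentiableAt ℝ (F5 s) θ :=
  (differentiableAt_const _).mul
    (diff_FC.differentiableAt.div (diff_FS.differentiableAt.pow 2) (pow_ne_zero _ h))

theorem diff_F6 (s : ℤ) {θ : ℝ} (h : (Real.sin θ : ℂ) ≠ 0) : DifferentiableAt ℝ (F6 s) θ :=
  ((((differentiableAt_const _).mul (diff_FC.differentiableAt.pow 2)).div
    (diff_FS.differentiableAt.pow 2) (pow_ne_zero _ h)).sub (differentiableAt_const _)).neg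

theorem diff_oR : Differentiable ℝ (fun r : ℝ => (r : ℂ)) := Complex.ofRealCLM.differentiable

theorem contDiff_oR : ContDiff ℝ ∞ (fun r : ℝ => (r : ℂ)) := Complex.ofRealCLM.contDiff

theorem diff_P1 (a : ℝ) : Differentiable ℝ (P1 a) := differentiable_const _

theorem diff_P2 (a : ℝ) : Differentiable ℝ (P2 a) :=
  (differentiable_const _).mul ((diff_oR.pow 2).add (differentiable_const _))

theorem diff_P4 (a M : ℝ) : Differentiable ℝ (P4 a M) :=
  ((diff_oR.pow 2).sub ((differentiable_const _).mul diff_oR)).add (differentiable_const _)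

theorem diff_P5 (s : ℤ) : Differentiable ℝ (P5 s) :=
  ((differentiable_const _).mul diff_oR).mul (differentiable_const _)

theorem diff_P6 (s : ℤ) (M : ℝ) : Differentiable ℝ (P6 s M) :=
  ((differentiable_const _).mul (diff_oR.sub (differentiable_const _))).mul (differentiable_const _)

theorem diff_P7 (s : ℤ) : Differentiable ℝ (P7 s) := differentiable_const _

theorem contDiff_P1 (a : ℝ) : ContDiff ℝ ∞ (P1 a) := contDiff_const

theorem contDiff_P2 (a : ℝ) : ContDiff ℝ ∞ (P2 a) :=
  contDiff_const.mul ((contDiff_oR.pow 2).add contDiff_const)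

theorem contDiff_P4 (a M : ℝ) : ContDiff ℝ ∞ (P4 a M) :=
  ((contDiff_oR.pow 2).sub (contDiff_const.mul contDiff_oR)).add contDiff_const

theorem contDiff_P5 (s : ℤ) : ContDiff ℝ ∞ (P5 s) :=
  (contDiff_const.mul contDiff_oR).mul contDiff_const

theorem contDiff_P6 (s : ℤ) (M : ℝ) : ContDiff ℝ ∞ (P6 s M) :=
  (contDiff_const.mul (contDiff_oR.sub contDiff_const)).mul contDiff_const

theorem contDiff_P7 (s : ℤ) : ContDiff ℝ ∞ (P7 s) := contDiff_const

/-! ### Pt-level coefficient smoothness -/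

theorem smp_T : ContDiff ℝ ∞ (fun q : Pt => q.2.2.1) :=
  contDiff_fst.comp (contDiff_snd.comp contDiff_snd)

theorem smp_R : ContDiff ℝ ∞ (fun q : Pt => q.2.1) := contDiff_fst.comp contDiff_snd

theorem smP_FS : ContDiff ℝ ∞ (fun q : Pt => FS q.2.2.1) := contDiff_FS.comp smp_T

theorem smP_FC : ContDiff ℝ ∞ (fun q : Pt => (Real.cos q.2.2.1 : ℂ)) := contDiff_FC.comp smp_T

section CoeffOnU

variable {U : Set Pt} (hsin : ∀ q ∈ U, (Real.sin q.2.2.1 : ℂ) ≠ 0)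

theorem smF1 (a : ℝ) : ContDiffOn ℝ ∞ (fun q : Pt => F1 a q.2.2.1) U :=
  (contDiff_const.mul (smP_FS.pow 2)).contDiffOn

theorem smF2 (s : ℤ) (a : ℝ) : ContDiffOn ℝ ∞ (fun q : Pt => F2 s a q.2.2.1) U :=
  (contDiff_const.mul smP_FC).contDiffOn

include hsin

theorem smF3 : ContDiffOn ℝ ∞ (fun q : Pt => F3 q.2.2.1) U :=
  (smP_FS.contDiffOn.inv hsin).congr fun _ _ => one_div _

theorem smF4 : ContDiffOn ℝ ∞ (fun q : Pt => F4 q.2.2.1) U :=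
  (((smP_FS.pow 2).contDiffOn).inv fun q hq => pow_ne_zero _ (hsin q hq)).congr
    fun _ _ => one_div _

theorem smF5 (s : ℤ) : ContDiffOn ℝ ∞ (fun q : Pt => F5 s q.2.2.1) U :=
  contDiffOn_const.mul
    ((smP_FC.contDiffOn.mul (((smP_FS.pow 2).contDiffOn).inv
      fun q hq => pow_ne_zero _ (hsin q hq))).congr fun _ _ => div_eq_mul_inv _ _)

theorem smF6 (s : ℤ) : ContDiffOn ℝ ∞ (fun q : Pt => F6 s q.2.2.1) U :=
  ((((contDiffOn_const.mul (smP_FC.pow 2).contDiffOn).mul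
      (((smP_FS.pow 2).contDiffOn).inv fun q hq => pow_ne_zero _ (hsin q hq))).congr
    fun _ _ => div_eq_mul_inv _ _).sub contDiffOn_const).neg

end CoeffOnU

/-! ### Smoothness of the operators -/

section OpSmooth

variable {U : Set Pt} (hU : IsOpen U) (hsin : ∀ q ∈ U, (Real.sin q.2.2.1 : ℂ) ≠ 0)
  {f : Pt → ℂ}

include hU

theorem smW (hf : ContDiffOn ℝ ∞ f U) :
    ContDiffOn ℝ ∞ (fun q' : Pt => FS q'.2.2.1 * D eT f q') U :=
  smP_FS.contDiffOn.mul (D_smooth hU hf eT)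

include hsin

theorem carterD_smooth (s : ℤ) (a : ℝ) (hf : ContDiffOn ℝ ∞ f U) :
    ContDiffOn ℝ ∞ (carterD s a f) U :=
  ((((((smF1 a).mul (D_smooth hU (D_smooth hU hf eV) eV)).add
      ((smF2 s a).mul (D_smooth hU hf eV))).add
      ((smF3 hsin).mul (D_smooth hU (smW hU hf) eT))).add
      ((smF4 hsin).mul (D_smooth hU (D_smooth hU hf ePh) ePh))).add
      ((smF5 hsin s).mul (D_smooth hU hf ePh))).add
      ((smF6 hsin s).mul hf)

omit hsin

theorem rOpD_smooth (s : ℤ) (a M : ℝ) (hf : ContDiffOn ℝ ∞ f U) :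
    ContDiffOn ℝ ∞ (rOpD s a M f) U :=
  (((((((contDiff_P1 a).comp smp_R).contDiffOn.mul (D_smooth hU (D_smooth hU hf ePh) eV)).add
      (((contDiff_P2 a).comp smp_R).contDiffOn.mul (D_smooth hU (D_smooth hU hf eRr) eV))).add
      (((contDiff_P1 a).comp smp_R).contDiffOn.mul (D_smooth hU (D_smooth hU hf eRr) ePh))).add
      (((contDiff_P4 a M).comp smp_R).contDiffOn.mul (D_smooth hU (D_smooth hU hf eRr) eRr))).add
      (((contDiff_P5 s).comp smp_R).contDiffOn.mul (D_smooth hU hf eV))).add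
      (((contDiff_P6 s M).comp smp_R).contDiffOn.mul (D_smooth hU hf eRr)) |>.add
      (((contDiff_P7 s).comp smp_R).contDiffOn.mul hf)

end OpSmooth

end Aux12
namespace Aux12

section Comm

variable {U : Set Pt} (hU : IsOpen U) (hsin : ∀ q ∈ U, (Real.sin q.2.2.1 : ℂ) ≠ 0)
  {f g : Pt → ℂ} {p : Pt} {e : Pt} {s : ℤ} {a M : ℝ}

include hU

theorem comm_word2 (hf : ContDiffOn ℝ ∞ f U) (hp : p ∈ U) (e e1 e2 : Pt) :
    D e (D e1 (D e2 f)) p = D e1 (D e2 (D e f)) p :=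
  (D_comm hU (D_smooth hU hf e2) hp e e1).trans
    (D_congr e1 (evOn hU hp fun q hq => D_comm hU hf hq e e2))

theorem comm_w3 (he : e.2.2.1 = 0) (hf : ContDiffOn ℝ ∞ f U) (hp : p ∈ U) :
    D e (D eT (fun q' => FS q'.2.2.1 * D eT f q')) p
      = D eT (fun q' => FS q'.2.2.1 * D eT (D e f) q') p :=
  (D_comm hU (smW hU hf) hp e eT).trans
    (D_congr eT (evOn hU hp fun q hq =>
      (D_mul_th (diff_FS _) (DA hU (D_smooth hU hf eT) hq) he).trans
        (by rw [D_comm hU hf hq e eT])))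

include hsin

theorem C1 (hf : ContDiffOn ℝ ∞ f U) (hp : p ∈ U) (he : e.2.2.1 = 0) :
    D e (carterD s a f) p = carterD s a (D e f) p := by
  have hsp := hsin p hp
  have h1 : D e (fun q => F1 a q.2.2.1 * D eV (D eV f) q) p
      = F1 a p.2.2.1 * D eV (D eV (D e f)) p :=
    (D_mul_th ((diff_F1 a).differentiableAt)
        (DA hU (D_smooth hU (D_smooth hU hf eV) eV) hp) he).trans
      (by rw [comm_word2 hU hf hp e eV eV])
  have h2 : D e (fun q => F2 s a q.2.2.1 * D eV f q) p = F2 s a p.2.2.1 * D eV (D e f) p :=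
    (D_mul_th ((diff_F2 s a).differentiableAt) (DA hU (D_smooth hU hf eV) hp) he).trans
      (by rw [D_comm hU hf hp e eV])
  have h3 : D e (fun q => F3 q.2.2.1 * D eT (fun q' => FS q'.2.2.1 * D eT f q') q) p
      = F3 p.2.2.1 * D eT (fun q' => FS q'.2.2.1 * D eT (D e f) q') p :=
    (D_mul_th (diff_F3 hsp) (DA hU (D_smooth hU (smW hU hf) eT) hp) he).trans
      (by rw [comm_w3 hU he hf hp])
  have h4 : D e (fun q => F4 q.2.2.1 * D ePh (D ePh f) q) p
      = F4 p.2.2.1 * D ePh (D ePh (D e f)) p :=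
    (D_mul_th (diff_F4 hsp) (DA hU (D_smooth hU (D_smooth hU hf ePh) ePh) hp) he).trans
      (by rw [comm_word2 hU hf hp e ePh ePh])
  have h5 : D e (fun q => F5 s q.2.2.1 * D ePh f q) p = F5 s p.2.2.1 * D ePh (D e f) p :=
    (D_mul_th (diff_F5 s hsp) (DA hU (D_smooth hU hf ePh) hp) he).trans
      (by rw [D_comm hU hf hp e ePh])
  have h6 : D e (fun q => F6 s q.2.2.1 * f q) p = F6 s p.2.2.1 * D e f p :=
    D_mul_th (diff_F6 s hsp) (DA hU hf hp) he
  calc D e (carterD s a f) p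
      = D e (fun q => F1 a q.2.2.1 * D eV (D eV f) q) p
        + D e (fun q => F2 s a q.2.2.1 * D eV f q) p
        + D e (fun q => F3 q.2.2.1 * D eT (fun q' => FS q'.2.2.1 * D eT f q') q) p
        + D e (fun q => F4 q.2.2.1 * D ePh (D ePh f) q) p
        + D e (fun q => F5 s q.2.2.1 * D ePh f q) p
        + D e (fun q => F6 s q.2.2.1 * f q) p :=
      D_add6 (DA hU ((smF1 a).mul (D_smooth hU (D_smooth hU hf eV) eV)) hp)
        (DA hU ((smF2 s a).mul (D_smooth hU hf eV)) hp)
        (DA hU ((smF3 hsin).mul (D_smooth hU (smW hU hf) eT)) hp)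
        (DA hU ((smF4 hsin).mul (D_smooth hU (D_smooth hU hf ePh) ePh)) hp)
        (DA hU ((smF5 hsin s).mul (D_smooth hU hf ePh)) hp)
        (DA hU ((smF6 hsin s).mul hf) hp) e
    _ = carterD s a (D e f) p := by rw [h1, h2, h3, h4, h5, h6]; rfl

omit hsin

theorem C2 (hf : ContDiffOn ℝ ∞ f U) (hg : ContDiffOn ℝ ∞ g U) (hp : p ∈ U) :
    carterD s a (fun q => f q + g q) p = carterD s a f p + carterD s a g p := by
  have hVV : D eV (D eV (fun q => f q + g q)) p = D eV (D eV f) p + D eV (D eV g) p :=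
    (D_congr eV (evOn hU hp fun q hq => D_add (DA hU hf hq) (DA hU hg hq) eV)).trans
      (D_add (DA hU (D_smooth hU hf eV) hp) (DA hU (D_smooth hU hg eV) hp) eV)
  have hV : D eV (fun q => f q + g q) p = D eV f p + D eV g p :=
    D_add (DA hU hf hp) (DA hU hg hp) eV
  have hT : D eT (fun q' => FS q'.2.2.1 * D eT (fun q => f q + g q) q') p
      = D eT (fun q' => FS q'.2.2.1 * D eT f q') p
        + D eT (fun q' => FS q'.2.2.1 * D eT g q') p :=
    (D_congr eT (evOn hU hp fun q hq => by
        beta_reduce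
        rw [D_add (DA hU hf hq) (DA hU hg hq) eT, mul_add])).trans
      (D_add (DA hU (smW hU hf) hp) (DA hU (smW hU hg) hp) eT)
  have hPhPh : D ePh (D ePh (fun q => f q + g q)) p = D ePh (D ePh f) p + D ePh (D ePh g) p :=
    (D_congr ePh (evOn hU hp fun q hq => D_add (DA hU hf hq) (DA hU hg hq) ePh)).trans
      (D_add (DA hU (D_smooth hU hf ePh) hp) (DA hU (D_smooth hU hg ePh) hp) ePh)
  have hPh : D ePh (fun q => f q + g q) p = D ePh f p + D ePh g p :=
    D_add (DA hU hf hp) (DA hU hg hp) ePh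
  simp only [carterD]
  rw [hVV, hV, hT, hPhPh, hPh]
  ring

theorem C3 (P : ℝ → ℂ) (hP : Differentiable ℝ P) (hf : ContDiffOn ℝ ∞ f U) (hp : p ∈ U) :
    carterD s a (fun q => P q.2.1 * f q) p = P p.2.1 * carterD s a f p := by
  have hVV : D eV (D eV (fun q => P q.2.1 * f q)) p = P p.2.1 * D eV (D eV f) p :=
    (D_congr eV (evOn hU hp fun q hq => D_mul_r (hP _) (DA hU hf hq) rfl)).trans
      (D_mul_r (hP _) (DA hU (D_smooth hU hf eV) hp) rfl)
  have hV : D eV (fun q => P q.2.1 * f q) p = P p.2.1 * D eV f p :=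
    D_mul_r (hP _) (DA hU hf hp) rfl
  have hT : D eT (fun q' => FS q'.2.2.1 * D eT (fun q => P q.2.1 * f q) q') p
      = P p.2.1 * D eT (fun q' => FS q'.2.2.1 * D eT f q') p :=
    (D_congr eT (evOn hU hp fun q hq => by
        beta_reduce
        rw [D_mul_r (hP _) (DA hU hf hq) rfl]; ring)).trans
      (D_mul_r (hP _) (DA hU (smW hU hf) hp) rfl)
  have hPhPh : D ePh (D ePh (fun q => P q.2.1 * f q)) p = P p.2.1 * D ePh (D ePh f) p :=
    (D_congr ePh (evOn hU hp fun q hq => D_mul_r (hP _) (DA hU hf hq) rfl)).trans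
      (D_mul_r (hP _) (DA hU (D_smooth hU hf ePh) hp) rfl)
  have hPh : D ePh (fun q => P q.2.1 * f q) p = P p.2.1 * D ePh f p :=
    D_mul_r (hP _) (DA hU hf hp) rfl
  simp only [carterD]
  rw [hVV, hV, hT, hPhPh, hPh]
  ring

theorem carterD_add7 {t1 t2 t3 t4 t5 t6 t7 : Pt → ℂ}
    (h1 : ContDiffOn ℝ ∞ t1 U) (h2 : ContDiffOn ℝ ∞ t2 U) (h3 : ContDiffOn ℝ ∞ t3 U)
    (h4 : ContDiffOn ℝ ∞ t4 U) (h5 : ContDiffOn ℝ ∞ t5 U) (h6 : ContDiffOn ℝ ∞ t6 U)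
    (h7 : ContDiffOn ℝ ∞ t7 U) (hp : p ∈ U) :
    carterD s a (fun q => t1 q + t2 q + t3 q + t4 q + t5 q + t6 q + t7 q) p
      = carterD s a t1 p + carterD s a t2 p + carterD s a t3 p + carterD s a t4 p
        + carterD s a t5 p + carterD s a t6 p + carterD s a t7 p :=
  calc carterD s a (fun q => t1 q + t2 q + t3 q + t4 q + t5 q + t6 q + t7 q) p
      = carterD s a (fun q => t1 q + t2 q + t3 q + t4 q + t5 q + t6 q) p + carterD s a t7 p :=
        C2 hU (((((h1.add h2).add h3).add h4).add h5).add h6) h7 hp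
    _ = carterD s a (fun q => t1 q + t2 q + t3 q + t4 q + t5 q) p + carterD s a t6 p
        + carterD s a t7 p := by
        rw [C2 hU ((((h1.add h2).add h3).add h4).add h5) h6 hp]
    _ = carterD s a (fun q => t1 q + t2 q + t3 q + t4 q) p + carterD s a t5 p + carterD s a t6 p
        + carterD s a t7 p := by
        rw [C2 hU (((h1.add h2).add h3).add h4) h5 hp]
    _ = carterD s a (fun q => t1 q + t2 q + t3 q) p + carterD s a t4 p + carterD s a t5 p
        + carterD s a t6 p + carterD s a t7 p := by
        rw [C2 hU ((h1.add h2).add h3) h4 hp]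
    _ = carterD s a (fun q => t1 q + t2 q) p + carterD s a t3 p + carterD s a t4 p
        + carterD s a t5 p + carterD s a t6 p + carterD s a t7 p := by
        rw [C2 hU (h1.add h2) h3 hp]
    _ = carterD s a t1 p + carterD s a t2 p + carterD s a t3 p + carterD s a t4 p
        + carterD s a t5 p + carterD s a t6 p + carterD s a t7 p := by
        rw [C2 hU h1 h2 hp]

include hsin

theorem C4 (hf : ContDiffOn ℝ ∞ f U) (hp : p ∈ U) :
    carterD s a (rOpD s a M f) p = rOpD s a M (carterD s a f) p := by
  have key2 : ∀ P : ℝ → ℂ, Differentiable ℝ P → ∀ e1 e2 : Pt, e1.2.2.1 = 0 → e2.2.2.1 = 0 →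
      carterD s a (fun q => P q.2.1 * D e1 (D e2 f) q) p
        = P p.2.1 * D e1 (D e2 (carterD s a f)) p := by
    intro P hP e1 e2 he1 he2
    rw [C3 hU P hP (D_smooth hU (D_smooth hU hf e2) e1) hp]
    congr 1
    exact ((C1 hU hsin (D_smooth hU hf e2) hp he1).symm).trans
      (D_congr e1 (evOn hU hp fun q hq => (C1 hU hsin hf hq he2).symm))
  have key1 : ∀ P : ℝ → ℂ, Differentiable ℝ P → ∀ e1 : Pt, e1.2.2.1 = 0 →
      carterD s a (fun q => P q.2.1 * D e1 f q) p = P p.2.1 * D e1 (carterD s a f) p := by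
    intro P hP e1 he1
    rw [C3 hU P hP (D_smooth hU hf e1) hp, ← C1 hU hsin hf hp he1]
  calc carterD s a (rOpD s a M f) p
      = carterD s a (fun q => P1 a q.2.1 * D eV (D ePh f) q) p
        + carterD s a (fun q => P2 a q.2.1 * D eV (D eRr f) q) p
        + carterD s a (fun q => P1 a q.2.1 * D ePh (D eRr f) q) p
        + carterD s a (fun q => P4 a M q.2.1 * D eRr (D eRr f) q) p
        + carterD s a (fun q => P5 s q.2.1 * D eV f q) p
        + carterD s a (fun q => P6 s M q.2.1 * D eRr f q) p
        + carterD s a (fun q => P7 s q.2.1 * f q) p :=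
      carterD_add7 hU
        (((contDiff_P1 a).comp smp_R).contDiffOn.mul (D_smooth hU (D_smooth hU hf ePh) eV))
        (((contDiff_P2 a).comp smp_R).contDiffOn.mul (D_smooth hU (D_smooth hU hf eRr) eV))
        (((contDiff_P1 a).comp smp_R).contDiffOn.mul (D_smooth hU (D_smooth hU hf eRr) ePh))
        (((contDiff_P4 a M).comp smp_R).contDiffOn.mul (D_smooth hU (D_smooth hU hf eRr) eRr))
        (((contDiff_P5 s).comp smp_R).contDiffOn.mul (D_smooth hU hf eV))
        (((contDiff_P6 s M).comp smp_R).contDiffOn.mul (D_smooth hU hf eRr))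
        (((contDiff_P7 s).comp smp_R).contDiffOn.mul hf) hp
    _ = rOpD s a M (carterD s a f) p := by
        rw [key2 (P1 a) (diff_P1 a) eV ePh rfl rfl, key2 (P2 a) (diff_P2 a) eV eRr rfl rfl,
          key2 (P1 a) (diff_P1 a) ePh eRr rfl rfl, key2 (P4 a M) (diff_P4 a M) eRr eRr rfl rfl,
          key1 (P5 s) (diff_P5 s) eV rfl, key1 (P6 s M) (diff_P6 s M) eRr rfl,
          C3 hU (P7 s) (diff_P7 s) hf hp]
        rfl

end Comm

end Aux12
namespace Aux12

section Bridge

variable {U : Set Pt} (hU : IsOpen U) {f g : Pt → ℂ} {p : Pt} {s : ℤ} {a M : ℝ}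

include hU

theorem bridgeL (hf : ContDiffOn ℝ ∞ f U) (hp : p ∈ U) :
    spinLap4 s f p
      = F3 p.2.2.1 * D eT (fun q' => FS q'.2.2.1 * D eT f q') p
        + F4 p.2.2.1 * D ePh (D ePh f) p + F5 s p.2.2.1 * D ePh f p + F6 s p.2.2.1 * f p := by
  have hT : pdT (fun q' => (Real.sin q'.2.2.1 : ℂ) * pdT f q') p
      = D eT (fun q' => FS q'.2.2.1 * D eT f q') p :=
    (pdT_congr (evOn hU hp fun q hq => by
        show (Real.sin q.2.2.1 : ℂ) * pdT f q = FS q.2.2.1 * D eT f q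
        rw [pdT_eq (DA hU hf hq)])).trans (pdT_eq (DA hU (smW hU hf) hp))
  have hPhPh : pdPh (pdPh f) p = D ePh (D ePh f) p :=
    (pdPh_congr (evOn hU hp fun q hq => pdPh_eq (DA hU hf hq))).trans
      (pdPh_eq (DA hU (D_smooth hU hf ePh) hp))
  have hPh : pdPh f p = D ePh f p := pdPh_eq (DA hU hf hp)
  show F3 p.2.2.1 * pdT (fun q' => (Real.sin q'.2.2.1 : ℂ) * pdT f q') p
      + (1 / (Real.sin p.2.2.1 : ℂ) ^ 2) * pdPh (pdPh f) p
      + 2 * Complex.I * (s : ℂ) * ((Real.cos p.2.2.1 : ℂ) / (Real.sin p.2.2.1 : ℂ) ^ 2) * pdPh f p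
      - ((s : ℂ) ^ 2 * (Real.cos p.2.2.1 : ℂ) ^ 2 / (Real.sin p.2.2.1 : ℂ) ^ 2 - (s : ℂ)) * f p
      = _
  rw [hT, hPhPh, hPh]
  simp only [F3, F4, F5, F6, FS]
  ring

theorem bridgeQ (hf : ContDiffOn ℝ ∞ f U) (hp : p ∈ U) :
    carterOp s a f p = carterD s a f p := by
  have hVV : pdV (pdV f) p = D eV (D eV f) p :=
    (pdV_congr (evOn hU hp fun q hq => pdV_eq (DA hU hf hq))).trans
      (pdV_eq (DA hU (D_smooth hU hf eV) hp))
  have hV : pdV f p = D eV f p := pdV_eq (DA hU hf hp)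
  unfold carterOp
  rw [bridgeL hU hf hp, hVV, hV]
  simp only [carterD, F1, F2, F3, F4, F5, F6, FS]
  ring

theorem bridgeT (hf : ContDiffOn ℝ ∞ f U) (hp : p ∈ U) :
    teukolskyOp s a M f p = carterD s a f p + rOpD s a M f p := by
  have hVV : pdV (pdV f) p = D eV (D eV f) p :=
    (pdV_congr (evOn hU hp fun q hq => pdV_eq (DA hU hf hq))).trans
      (pdV_eq (DA hU (D_smooth hU hf eV) hp))
  have hVPh : pdV (pdPh f) p = D eV (D ePh f) p :=
    (pdV_congr (evOn hU hp fun q hq => pdPh_eq (DA hU hf hq))).trans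
      (pdV_eq (DA hU (D_smooth hU hf ePh) hp))
  have hVR : pdV (pdR f) p = D eV (D eRr f) p :=
    (pdV_congr (evOn hU hp fun q hq => pdR_eq (DA hU hf hq))).trans
      (pdV_eq (DA hU (D_smooth hU hf eRr) hp))
  have hPhR : pdPh (pdR f) p = D ePh (D eRr f) p :=
    (pdPh_congr (evOn hU hp fun q hq => pdR_eq (DA hU hf hq))).trans
      (pdPh_eq (DA hU (D_smooth hU hf eRr) hp))
  have hRR : pdR (pdR f) p = D eRr (D eRr f) p :=
    (pdR_congr (evOn hU hp fun q hq => pdR_eq (DA hU hf hq))).trans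
      (pdR_eq (DA hU (D_smooth hU hf eRr) hp))
  have hV : pdV f p = D eV f p := pdV_eq (DA hU hf hp)
  have hR : pdR f p = D eRr f p := pdR_eq (DA hU hf hp)
  unfold teukolskyOp
  rw [bridgeL hU hf hp, hVV, hVPh, hVR, hPhR, hRR, hV, hR]
  simp only [carterD, rOpD, F1, F2, F3, F4, F5, F6, FS, P1, P2, P4, P5, P6, P7]
  ring

theorem spinLap4_congrOn (h : Set.EqOn f g U) :
    Set.EqOn (spinLap4 s f) (spinLap4 s g) U := by
  intro q hq
  have hT : deriv (fun θ => (Real.sin θ : ℂ)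
        * deriv (fun θ' => f (q.1, q.2.1, θ', q.2.2.2)) θ) q.2.2.1
      = deriv (fun θ => (Real.sin θ : ℂ)
        * deriv (fun θ' => g (q.1, q.2.1, θ', q.2.2.2)) θ) q.2.2.1 :=
    pdT_congr (f := fun q' => (Real.sin q'.2.2.1 : ℂ) * pdT f q')
      (g := fun q' => (Real.sin q'.2.2.1 : ℂ) * pdT g q')
      (evOn hU hq fun q' hq' => by
        show (Real.sin q'.2.2.1 : ℂ) * pdT f q' = (Real.sin q'.2.2.1 : ℂ) * pdT g q'
        rw [pdT_congrOn hU h hq'])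
  have h2 : pdPh (pdPh f) q = pdPh (pdPh g) q :=
    pdPh_congr (evOn hU hq (pdPh_congrOn hU h))
  have h3 : pdPh f q = pdPh g q := pdPh_congrOn hU h hq
  unfold spinLap4
  rw [hT, h2, h3, h hq]

theorem carterOp_congrOn (h : Set.EqOn f g U) :
    Set.EqOn (carterOp s a f) (carterOp s a g) U := by
  intro q hq
  unfold carterOp
  rw [pdV_congr (evOn hU hq (pdV_congrOn hU h)), pdV_congrOn hU h hq,
    spinLap4_congrOn hU h hq]

theorem teukolskyOp_congrOn (h : Set.EqOn f g U) :
    Set.EqOn (teukolskyOp s a M f) (teukolskyOp s a M g) U := by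
  intro q hq
  unfold teukolskyOp
  rw [pdV_congr (evOn hU hq (pdV_congrOn hU h)),
    pdV_congr (evOn hU hq (pdPh_congrOn hU h)),
    pdV_congr (evOn hU hq (pdR_congrOn hU h)),
    pdPh_congr (evOn hU hq (pdR_congrOn hU h)),
    pdR_congr (evOn hU hq (pdR_congrOn hU h)),
    pdV_congrOn hU h hq, pdR_congrOn hU h hq,
    spinLap4_congrOn hU h hq, h hq]

end Bridge

end Aux12


/-- The Teukolsky operator and the spin-weighted Carter operator commute
on smooth functions on an open subset of `ℝ × ℝ × (0,π) × ℝ`. -/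
theorem stmt_12 (a M : ℝ) (s : ℤ) (U : Set (ℝ × ℝ × ℝ × ℝ)) (hU : IsOpen U)
    (hUsub : ∀ p ∈ U, p.2.2.1 ∈ Ioo (0 : ℝ) Real.pi)
    (ψ : ℝ × ℝ × ℝ × ℝ → ℂ) (hψ : ContDiffOn ℝ (⊤ : ℕ∞) ψ U) :
    ∀ p ∈ U, teukolskyOp s a M (carterOp s a ψ) p = carterOp s a (teukolskyOp s a M ψ) p := by
  intro p hp
  have hsin : ∀ q ∈ U, (Real.sin q.2.2.1 : ℂ) ≠ 0 := fun q hq =>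
    Complex.ofReal_ne_zero.mpr
      (Real.sin_pos_of_pos_of_lt_pi (hUsub q hq).1 (hUsub q hq).2).ne'
  have hf : ContDiffOn ℝ ∞ ψ U := hψ.of_le (by simp)
  have hQs : ContDiffOn ℝ ∞ (Aux12.carterD s a ψ) U := Aux12.carterD_smooth hU hsin s a hf
  have hRs : ContDiffOn ℝ ∞ (Aux12.rOpD s a M ψ) U := Aux12.rOpD_smooth hU s a M hf
  calc teukolskyOp s a M (carterOp s a ψ) p
      = teukolskyOp s a M (Aux12.carterD s a ψ) p :=
        Aux12.teukolskyOp_congrOn hU (fun q hq => Aux12.bridgeQ hU hf hq) hp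
    _ = Aux12.carterD s a (Aux12.carterD s a ψ) p + Aux12.rOpD s a M (Aux12.carterD s a ψ) p :=
        Aux12.bridgeT hU hQs hp
    _ = Aux12.carterD s a (Aux12.carterD s a ψ) p
        + Aux12.carterD s a (Aux12.rOpD s a M ψ) p := by
        rw [Aux12.C4 hU hsin hf hp]
    _ = Aux12.carterD s a (fun q => Aux12.carterD s a ψ q + Aux12.rOpD s a M ψ q) p :=
        (Aux12.C2 hU hQs hRs hp).symm
    _ = carterOp s a (fun q => Aux12.carterD s a ψ q + Aux12.rOpD s a M ψ q) p :=
        (Aux12.bridgeQ hU (hQs.add hRs) hp).symm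
    _ = carterOp s a (teukolskyOp s a M ψ) p :=
        (Aux12.carterOp_congrOn hU (fun q hq => Aux12.bridgeT hU hf hq) hp).symm
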